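/- For every α ∈ [0,1] there exists a partition μ (i.e. a sequence μ_n with 0 ≤ μ_n < n for n ≥ 2) such that the partial counts B_n = Σ_{2≤j≤n} μ_j satisfy lim_{n→∞} 2 B_n / (n(n-1)) = α. Consequently the Hausdorff spectrum of the pro-p group G of infinite upper unitriangular matrices over F_q is the whole interval [0,1], realized by partition subgroups. -/

import Mathlib

open Filter Finset

/-! Take `b_n = ⌊α·C(n,2)⌋` and `μ_n = b_n - b_{n-1}`. The sums of `μ` telescope to `b_n`, and
`b_n / C(n,2) → α` because `C(n,2) → ∞`. Since `C(n,2) - C(n-1,2) = n - 1` and `α ≤ 1`,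
consecutive floors differ by less than `n`, so `μ` is a partition. -/

theorem Nat.floor_lt_floor_add_of_sub_le {K : Type*} [Field K] [LinearOrder K]
    [IsStrictOrderedRing K] [FloorSemiring K] {x y : K} {n : ℕ} (hy : 0 ≤ y) (h : y - x ≤ n - 1) :
    ⌊y⌋₊ < ⌊x⌋₊ + n := by
  rw [Nat.floor_lt hy]
  push_cast
  linarith [Nat.lt_floor_add_one x]

theorem Finset.sum_Icc_two_tsub_pred {b : ℕ → ℕ} (hb : Monotone b) {n : ℕ} (hn : 1 ≤ n) :
    ∑ j ∈ Icc 2 n, (b j - b (j - 1)) = b n - b 1 := by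
  induction n, hn using Nat.le_induction with
  | base => simp
  | succ n hn ih =>
    rw [sum_Icc_succ_top (by omega), ih, Nat.add_sub_cancel]
    have h1 : b 1 ≤ b n := hb hn
    have h2 : b n ≤ b (n + 1) := hb n.le_succ
    omega

theorem Nat.tendsto_choose_two_atTop : Tendsto (fun n : ℕ => n.choose 2) atTop atTop := by
  refine tendsto_atTop_mono (fun n => ?_) (tendsto_sub_atTop_nat 1)
  cases n with
  | zero => simp
  | succ m => simp [Nat.choose_succ_succ]

/-- For every `α ∈ [0,1]` there is a partition `μ` (a sequence with `μ_n < n` for `n ≥ 2`)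
whose partial counts `B_n = Σ_{2≤j≤n} μ_j` satisfy `2B_n/(n(n-1)) → α`; since
`2B_n/(n(n-1)) = log_q|P_μ N_n/N_n| / log_q|G_n|`, this realizes every `α ∈ [0,1]` as the
Hausdorff dimension of a partition subgroup, so the Hausdorff spectrum of `G` is `[0,1]`. -/
theorem hausdorff_spectrum_partition (α : ℝ) (hα : α ∈ Set.Icc (0 : ℝ) 1) :
    ∃ μ : ℕ → ℕ, (∀ n, 2 ≤ n → μ n < n) ∧
      Tendsto (fun n : ℕ =>
          2 * ((∑ j ∈ Finset.Icc 2 n, μ j : ℕ) : ℝ) / ((n : ℝ) * ((n : ℝ) - 1)))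
        atTop (nhds α) := by
  obtain ⟨hα0, hα1⟩ := hα
  set b : ℕ → ℕ := fun n => ⌊α * n.choose 2⌋₊
  have hb : Monotone b := fun m n hmn => Nat.floor_mono (by gcongr)
  refine ⟨fun n => b n - b (n - 1), fun n hn => ?_, ?_⟩
  · obtain ⟨m, rfl⟩ : ∃ m, n = m + 1 := ⟨n - 1, by omega⟩
    have hstep : b (m + 1) < b m + (m + 1) := by
      refine Nat.floor_lt_floor_add_of_sub_le (by positivity) ?_
      push_cast [Nat.choose_succ_succ, Nat.choose_one_right]
      nlinarith
    simp only [Nat.add_sub_cancel]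
    omega
  · have hlim := (tendsto_nat_floor_mul_div_atTop hα0).comp
      (tendsto_natCast_atTop_atTop.comp Nat.tendsto_choose_two_atTop)
    refine hlim.congr' ?_
    filter_upwards [eventually_ge_atTop 1] with n hn
    show (b n : ℝ) / (n.choose 2 : ℝ) = _
    rw [sum_Icc_two_tsub_pred hb hn, show b 1 = 0 by simp [b], Nat.sub_zero, Nat.cast_choose_two,
      div_div_eq_mul_div, mul_comm]
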